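/- For every integer n ≥ 1 and every natural number m, f_n(2m+1) = u_m and f_n(2m) = 0. -/

import Mathlib

/-- The ±1 Thue–Morse sequence: `u n = (-1)^(s₂(n)+1)` where `s₂` is the binary digit sum. -/
def u (n : ℕ) : ℤ := (-1) ^ ((Nat.digits 2 n).sum + 1)

/-- The "Pascal triangle" associated to the Thue–Morse sequence:
`Sig k n` is `Σ^k_n` (k the superscript, n the subscript). -/
def Sig : ℕ → ℕ → ℤ
  | k, 0 => u k
  | 0, _ + 1 => 0
  | k + 1, n + 1 => Sig k n + Sig k (n + 1)

/-- The renormalized points `x^k_n = 2^{-(n-1)(n-2)/2} Σ^k_n`. -/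
noncomputable def xkn (n k : ℕ) : ℝ := (Sig k n : ℝ) / 2 ^ ((n - 1) * (n - 2) / 2)

/-- The piecewise linear interpolation `f n` of the points `x^k_n` at `k/2^{n-1}`,
vanishing on the nonpositive reals. -/
noncomputable def f (n : ℕ) (x : ℝ) : ℝ :=
  if x ≤ 0 then 0
  else
    xkn n ⌊(2 : ℝ) ^ (n - 1) * x⌋₊ +
      (2 : ℝ) ^ (n - 1) * (x - (⌊(2 : ℝ) ^ (n - 1) * x⌋₊ : ℝ) / 2 ^ (n - 1)) *
        (xkn n (⌊(2 : ℝ) ^ (n - 1) * x⌋₊ + 1) - xkn n ⌊(2 : ℝ) ^ (n - 1) * x⌋₊)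

/-! Column `n + 1` of `Sig` is the prefix sum of column `n`, and `u (2k) = u k`, `u (2k+1) = -u k`
make `Sig (2k) n` an integer combination of `Sig k 0, …, Sig k n`. Iterating this doubling `t`
times kills columns `1, …, t` at multiples of `2^t` and multiplies column `t + 1` by
`2^(t choose 2)`, which is exactly the normalisation in `xkn`. Hence `f n q = Sig q 1 =
u 0 + ⋯ + u (q - 1)` at every natural `q`, and these partial sums vanish at even `q` and equal
`u m` at `q = 2m + 1`. -/

open Finset

lemma u_two_mul (k : ℕ) : u (2 * k) = u k := by
  rcases Nat.eq_zero_or_pos k with rfl | hk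
  · rfl
  · rw [u, u, Nat.digits_def' one_lt_two (by omega)]
    simp

lemma u_two_mul_add_one (k : ℕ) : u (2 * k + 1) = -u k := by
  rw [u, u, Nat.digits_def' one_lt_two (by omega)]
  simp [Nat.mul_add_div, pow_succ, pow_add]

lemma Sig_zero_right (k : ℕ) : Sig k 0 = u k := by
  cases k <;> rfl

lemma Sig_succ_succ (k n : ℕ) : Sig (k + 1) (n + 1) = Sig k n + Sig k (n + 1) := rfl

lemma Sig_succ_one (k : ℕ) : Sig (k + 1) 1 = u k + Sig k 1 := by
  rw [Sig, Sig_zero_right]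

lemma Sig_add_two_add_two (k n : ℕ) :
    Sig (k + 2) (n + 2) = Sig k n + 2 * Sig k (n + 1) + Sig k (n + 2) := by
  simp only [Sig]
  ring

lemma Sig_two_mul_one (m : ℕ) : Sig (2 * m) 1 = 0 := by
  induction m with
  | zero => rfl
  | succ m ih =>
    rw [mul_add_one, Sig_succ_one, Sig_succ_one, ih, u_two_mul_add_one, u_two_mul]
    ring

lemma Sig_two_mul_add_one_one (m : ℕ) : Sig (2 * m + 1) 1 = u m := by
  rw [Sig_succ_one, Sig_two_mul_one, u_two_mul, add_zero]

/-- The coefficients of `Sig (2 * k) n = ∑ j, doublingCoeff n j * Sig k j` (`Sig_two_mul`); the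
recursion is read off from `Sig_add_two_add_two`. -/
def doublingCoeff : ℕ → ℕ → ℤ
  | 0, 0 => 1
  | 0, _ + 1 => 0
  | 1, _ => 0
  | _ + 2, 0 => 0
  | n + 2, j + 1 => 2 * doublingCoeff (n + 1) j + doublingCoeff n j

lemma doublingCoeff_succ_zero (n : ℕ) : doublingCoeff (n + 1) 0 = 0 := by
  cases n <;> rfl

lemma doublingCoeff_of_lt {n j : ℕ} (h : n < j) : doublingCoeff n j = 0 := by
  induction n using Nat.strong_induction_on generalizing j with
  | _ n ih =>
    match n, j with
    | 0, j + 1 => rfl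
    | 1, _ => rfl
    | n + 2, j + 1 =>
      rw [doublingCoeff, ih (n + 1) (by omega) (by omega), ih n (by omega) (by omega)]
      ring

lemma doublingCoeff_self_succ (n : ℕ) : doublingCoeff (n + 1) (n + 1) = 0 := by
  cases n with
  | zero => rfl
  | succ n =>
    rw [doublingCoeff, doublingCoeff_self_succ n, doublingCoeff_of_lt (Nat.lt_succ_self n)]
    ring

lemma doublingCoeff_add_two_succ (n : ℕ) : doublingCoeff (n + 2) (n + 1) = 2 ^ n := by
  induction n with
  | zero => rfl
  | succ n ih =>
    rw [doublingCoeff, ih, doublingCoeff_self_succ]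
    ring

lemma doublingCoeff_succ_eq_zero {n j : ℕ} (h : j = 0 ∨ n < j) :
    doublingCoeff (n + 1) j = 0 := by
  rcases h with rfl | h
  · exact doublingCoeff_succ_zero n
  · rcases (Nat.succ_le_of_lt h).eq_or_lt with rfl | h
    · exact doublingCoeff_self_succ n
    · exact doublingCoeff_of_lt h

lemma Sig_two_mul (k n : ℕ) :
    Sig (2 * k) n = ∑ j ∈ range (n + 1), doublingCoeff n j * Sig k j := by
  induction k generalizing n with
  | zero =>
    cases n with
    | zero => simp [Sig_zero_right, doublingCoeff]
    | succ n => simp [sum_range_succ', Sig, doublingCoeff_succ_zero]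
  | succ k ih =>
    match n with
    | 0 => simp [Sig_zero_right, u_two_mul, doublingCoeff]
    | 1 => simp [Sig_two_mul_one, doublingCoeff]
    | n + 2 =>
      have hc : ∀ j, doublingCoeff (n + 2) (j + 1) =
          2 * doublingCoeff (n + 1) j + doublingCoeff n j := fun j => rfl
      have ha : Sig (2 * k) n = ∑ j ∈ range (n + 2), doublingCoeff n j * Sig k j := by
        rw [sum_range_succ, doublingCoeff_of_lt (lt_add_one n), zero_mul, add_zero, ih]
      rw [mul_add_one, Sig_add_two_add_two, ha, ih (n + 1), ih (n + 2),
        sum_range_succ' (fun j => doublingCoeff (n + 2) j * Sig (k + 1) j),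
        sum_range_succ' (fun j => doublingCoeff (n + 2) j * Sig k j)]
      simp only [Sig_succ_succ, hc, doublingCoeff_succ_zero, mul_add, add_mul, sum_add_distrib,
        mul_sum, mul_assoc, zero_mul, add_zero]
      ring

lemma Sig_two_pow_mul_of_le {t j : ℕ} (q : ℕ) (hj : 1 ≤ j) (hjt : j ≤ t) :
    Sig (2 ^ t * q) j = 0 := by
  induction t generalizing j with
  | zero => omega
  | succ t ih =>
    obtain ⟨i, rfl⟩ : ∃ i, j = i + 1 := ⟨j - 1, by omega⟩
    rw [pow_succ', mul_assoc, Sig_two_mul]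
    refine sum_eq_zero fun l _ => ?_
    by_cases hl : l = 0 ∨ i < l
    · rw [doublingCoeff_succ_eq_zero hl, zero_mul]
    · rw [ih (by omega) (by omega), mul_zero]

lemma Sig_two_pow_mul_succ (t q : ℕ) : Sig (2 ^ t * q) (t + 1) = 2 ^ t.choose 2 * Sig q 1 := by
  induction t with
  | zero => simp
  | succ t ih =>
    rw [pow_succ', mul_assoc, Sig_two_mul, sum_eq_single (t + 1)]
    · rw [doublingCoeff_add_two_succ, ih, Nat.choose_succ_succ', Nat.choose_one_right, pow_add]
      ring
    · intro l _ hl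
      by_cases h : l = 0 ∨ t + 1 < l
      · rw [doublingCoeff_succ_eq_zero h, zero_mul]
      · rw [Sig_two_pow_mul_of_le q (by omega) (by omega : l ≤ t), mul_zero]
    · simp

lemma xkn_two_pow_mul {n : ℕ} (hn : 1 ≤ n) (q : ℕ) : xkn n (2 ^ (n - 1) * q) = Sig q 1 := by
  obtain ⟨t, rfl⟩ := Nat.exists_eq_add_of_le' hn
  have hexp : (t + 1 - 1) * (t + 1 - 2) / 2 = t.choose 2 := by
    rw [Nat.choose_two_right]
    congr 2
  rw [xkn, hexp, Nat.add_sub_cancel, Sig_two_pow_mul_succ]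
  push_cast
  field_simp

lemma f_natCast {n : ℕ} (hn : 1 ≤ n) (q : ℕ) : f n q = xkn n (2 ^ (n - 1) * q) := by
  rcases Nat.eq_zero_or_pos q with rfl | hq
  · obtain ⟨t, rfl⟩ := Nat.exists_eq_add_of_le' hn
    simp [f, xkn, Sig]
  · have hfloor : ⌊(2 : ℝ) ^ (n - 1) * q⌋₊ = 2 ^ (n - 1) * q := by
      exact_mod_cast Nat.floor_natCast (2 ^ (n - 1) * q)
    rw [f, if_neg (by simpa using hq.ne'), hfloor]
    push_cast
    field_simp
    ring

theorem f_values_at_integers (n : ℕ) (hn : 1 ≤ n) (m : ℕ) :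
    f n (2 * m + 1) = (u m : ℝ) ∧ f n (2 * m) = 0 := by
  have hf (q : ℕ) : f n q = Sig q 1 := by rw [f_natCast hn, xkn_two_pow_mul hn]
  constructor
  · simpa [Sig_two_mul_add_one_one] using hf (2 * m + 1)
  · simpa [Sig_two_mul_one] using hf (2 * m)
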